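/- Generalized Dodgson (Jacobi's identity for complementary minors, special case): for an invertible n × n matrix A over a field, det(A^{-1}[{1,n},{1,n}]) · det(A)² = det(A[2..n−1,2..n−1]) · det(A), equivalently the 2×2 minor of the adjugate adj(A) on rows and columns {1, n} equals det(A) · det(A[2..n−1,2..n−1]); Dodgson's rule follows by expanding that 2×2 minor of the adjugate as a product of cofactors. -/

import Mathlib

/-!
Jacobi's identity `det A * det (A⁻¹)[I,I] = det A[J,J]` for complementary index sets `I`, `J`
comes from one product. In block form over `I ⊕ J`, with `N = A⁻¹`,
`A * [[N₁₁, 0], [N₂₁, 1]] = [[1, A₁₂], [0, A₂₂]]`, since the first block column of `A * N` is that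
of the identity. Both factors and the product are block triangular, so taking determinants gives
the identity. The adjugate form follows from `adj A = det A • A⁻¹`.
-/

/-- Embedding of `Fin (n-2)` into `Fin n` keeping the middle indices `1,…,n-2`. -/
def mid {n : ℕ} (i : Fin (n - 2)) : Fin n := ⟨i + 1, by have := i.isLt; omega⟩

/-- The two extreme indices `1` and `n` of `{1,…,n}` (as `Fin n`), for `n ≥ 3`. -/
def ends {n : ℕ} (hn : 3 ≤ n) : Fin 2 → Fin n :=
  ![⟨0, by omega⟩, ⟨n - 1, by omega⟩]

namespace Matrix

variable {m k n R : Type*} [Fintype m] [Fintype k] [Fintype n]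
  [DecidableEq m] [DecidableEq k] [DecidableEq n] [CommRing R]

theorem det_mul_det_toBlocks₁₁_nonsing_inv (M : Matrix (m ⊕ k) (m ⊕ k) R) (hM : IsUnit M.det) :
    M.det * M⁻¹.toBlocks₁₁.det = M.toBlocks₂₂.det := by
  set N := M⁻¹
  have hMN : M * N = 1 := M.mul_nonsing_inv hM
  rw [← M.fromBlocks_toBlocks, ← N.fromBlocks_toBlocks, fromBlocks_multiply, ← fromBlocks_one,
    fromBlocks_inj] at hMN
  obtain ⟨h₁₁, -, h₂₁, -⟩ := hMN
  have hMX : M * fromBlocks N.toBlocks₁₁ 0 N.toBlocks₂₁ 1 =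
      fromBlocks 1 M.toBlocks₁₂ 0 M.toBlocks₂₂ := by
    conv_lhs => rw [← M.fromBlocks_toBlocks]
    rw [fromBlocks_multiply, h₁₁, h₂₁]
    simp
  calc M.det * N.toBlocks₁₁.det = (M * fromBlocks N.toBlocks₁₁ 0 N.toBlocks₂₁ 1).det := by
        rw [det_mul, det_fromBlocks_zero₁₂, det_one, mul_one]
    _ = M.toBlocks₂₂.det := by rw [hMX, det_fromBlocks_zero₂₁, det_one, one_mul]

theorem det_mul_det_submatrix_nonsing_inv (A : Matrix n n R) (hA : IsUnit A.det)
    (e : m ⊕ k ≃ n) :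
    A.det * (A⁻¹.submatrix (e ∘ Sum.inl) (e ∘ Sum.inl)).det =
      (A.submatrix (e ∘ Sum.inr) (e ∘ Sum.inr)).det := by
  have h := (A.submatrix e e).det_mul_det_toBlocks₁₁_nonsing_inv
    (by rwa [det_submatrix_equiv_self])
  rwa [det_submatrix_equiv_self, inv_submatrix_equiv] at h

theorem det_smul_nonsing_inv (A : Matrix n n R) (hA : IsUnit A.det) :
    A.det • A⁻¹ = A.adjugate := by
  rw [inv_def, smul_smul, Ring.mul_inverse_cancel _ hA, one_smul]

theorem det_submatrix_adjugate (A : Matrix n n R) (hA : IsUnit A.det) (f : m → n) :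
    (A.adjugate.submatrix f f).det = A.det ^ Fintype.card m * (A⁻¹.submatrix f f).det := by
  rw [← det_smul_nonsing_inv A hA]
  exact det_smul _ _

end Matrix

section EndsMid

variable {n : ℕ}

theorem ends_injective (hn : 3 ≤ n) : Function.Injective (ends hn) := by
  intro a b hab
  fin_cases a <;> fin_cases b <;> simp_all [ends, Fin.ext_iff] <;> omega

theorem mid_injective : Function.Injective (mid (n := n)) := by
  intro a b hab
  simp only [mid, Fin.ext_iff, add_left_inj] at hab
  exact Fin.ext hab

theorem ends_ne_mid (hn : 3 ≤ n) (k : Fin 2) (i : Fin (n - 2)) : ends hn k ≠ mid i := by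
  have := i.isLt
  fin_cases k <;> simp [mid, ends, Fin.ext_iff]
  omega

theorem sumElim_ends_mid_bijective (hn : 3 ≤ n) :
    Function.Bijective (Sum.elim (ends hn) (mid (n := n))) := by
  rw [Fintype.bijective_iff_injective_and_card]
  refine ⟨(ends_injective hn).sumElim mid_injective (ends_ne_mid hn), ?_⟩
  simp only [Fintype.card_sum, Fintype.card_fin]
  omega

noncomputable def endsMidEquiv (hn : 3 ≤ n) : Fin 2 ⊕ Fin (n - 2) ≃ Fin n :=
  Equiv.ofBijective _ (sumElim_ends_mid_bijective hn)

end EndsMid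

/-- Jacobi's identity for complementary minors, in the special case giving Dodgson's
rule: for an invertible matrix `A`, the `2 × 2` minor of `A⁻¹` on rows and columns
`{1, n}` times `det(A)²` equals `det` of the inner submatrix times `det A`;
equivalently, the `2 × 2` minor of the adjugate on rows and columns `{1, n}` equals
`det A` times the determinant of the inner submatrix. -/
theorem jacobi_complementary {K : Type*} [Field K] {n : ℕ} (hn : 3 ≤ n)
    (A : Matrix (Fin n) (Fin n) K) (hA : IsUnit A.det) :
    (A⁻¹.submatrix (ends hn) (ends hn)).det * A.det ^ 2 =
        (A.submatrix mid mid).det * A.det ∧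
      (A.adjugate.submatrix (ends hn) (ends hn)).det =
        A.det * (A.submatrix mid mid).det := by
  have jacobi : A.det * (A⁻¹.submatrix (ends hn) (ends hn)).det = (A.submatrix mid mid).det :=
    A.det_mul_det_submatrix_nonsing_inv hA (endsMidEquiv hn)
  constructor
  · rw [← jacobi]
    ring
  · rw [A.det_submatrix_adjugate hA, Fintype.card_fin, ← jacobi]
    ring
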